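/- Let T > 0 and let Θ : [0,T] × ℝ² → ℂ be measurable with M := sup_{0≤t≤T} ‖Θ(t)‖_{X⁰} < ∞ and I := ∫₀^T ‖Θ(t)‖_{X¹} dt < ∞. Then for every t ∈ [0,T], ∫_{ℝ²} | ∫₀^t e^{−(t−z)|ξ|} N[Θ](z,ξ) dz | dξ ≤ M · I. -/

import Mathlib

open MeasureTheory Filter
open scoped ENNReal NNReal

noncomputable section

abbrev E2 : Type := EuclideanSpace ℝ (Fin 2)

/-- Fourier-side `X^σ` norm: `∫ |ξ|^σ |g ξ| dξ` (valued in `ℝ≥0∞`). -/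
def Xnorm (σ : ℝ) (g : E2 → ℂ) : ℝ≥0∞ :=
  ∫⁻ ξ : E2, ENNReal.ofReal (‖ξ‖ ^ σ) * ‖g ξ‖₊

/-- Fourier-side quasi-geostrophic nonlinearity `N[Θ]`. -/
def QGN (Θ : ℝ → E2 → ℂ) (z : ℝ) (ξ : E2) : ℂ :=
  ∫ η : E2, (((ξ 0 * η 1 - ξ 1 * η 0) / ‖η‖ : ℝ) : ℂ) * Θ z (ξ - η) * Θ z η

/-- `Θ` is a mild solution on `[0,T]` with data `Θ₀`. -/
def IsMildSolutionOn (Θ : ℝ → E2 → ℂ) (Θ₀ : E2 → ℂ) (T : ℝ) : Prop :=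
  ∀ t ∈ Set.Icc (0:ℝ) T, ∀ᵐ ξ : E2 ∂volume, Θ t ξ =
    ((Real.exp (-(t * ‖ξ‖)) : ℝ) : ℂ) * Θ₀ ξ +
    ∫ z in (0:ℝ)..t, ((Real.exp (-((t - z) * ‖ξ‖)) : ℝ) : ℂ) * QGN Θ z ξ

/-- `Θ` is a global mild solution with data `Θ₀`. -/
def IsGlobalMildSolution (Θ : ℝ → E2 → ℂ) (Θ₀ : E2 → ℂ) : Prop :=
  ∀ t : ℝ, 0 ≤ t → ∀ᵐ ξ : E2 ∂volume, Θ t ξ =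
    ((Real.exp (-(t * ‖ξ‖)) : ℝ) : ℂ) * Θ₀ ξ +
    ∫ z in (0:ℝ)..t, ((Real.exp (-((t - z) * ‖ξ‖)) : ℝ) : ℂ) * QGN Θ z ξ

/-- `Θ ∈ C_b([0,∞), X^σ)`: bounded `X^σ` norm and `L¹`-continuity of `t ↦ |·|^σ Θ(t,·)`. -/
def CbX (σ : ℝ) (Θ : ℝ → E2 → ℂ) : Prop :=
  (⨆ t ∈ Set.Ici (0:ℝ), Xnorm σ (Θ t)) < ⊤ ∧
  ∀ t ∈ Set.Ici (0:ℝ),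
    Tendsto (fun s => ∫⁻ ξ : E2, ENNReal.ofReal (‖ξ‖ ^ σ) * ‖Θ s ξ - Θ t ξ‖₊)
      (nhdsWithin t (Set.Ici 0)) (nhds 0)

/-! Since `e^{-(t-z)|ξ|} ≤ 1` and the symbol `(ξ₁η₂ - ξ₂η₁)/|η|` equals
`((ξ-η)₁η₂ - (ξ-η)₂η₁)/|η|`, which is at most `|ξ - η|`, the Duhamel term at `ξ` is dominated by
`∫₀ᵗ (|Θ(z)| ⋆ |·||Θ(z)|)(ξ) dz`. Integrating in `ξ` first, the `L¹` norm of a convolution is the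
product of the `L¹` norms, i.e. `‖Θ(z)‖_{X⁰} ‖Θ(z)‖_{X¹}`; bounding the first factor by its
supremum over `[0, T]` leaves `M · I`. -/

theorem lintegral_lconvolution {G : Type*} [MeasurableSpace G] [AddGroup G] [MeasurableAdd₂ G]
    [MeasurableNeg G] {μ : Measure G} [μ.IsAddLeftInvariant] [SFinite μ] {f g : G → ℝ≥0∞}
    (hf : AEMeasurable f μ) (hg : AEMeasurable g μ) :
    ∫⁻ x, (f ⋆ₗ[μ] g) x ∂μ = (∫⁻ x, f x ∂μ) * ∫⁻ x, g x ∂μ := by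
  have inner : ∀ y, ∫⁻ x, f y * g (-y + x) ∂μ = f y * ∫⁻ x, g x ∂μ := fun y =>
    (lintegral_add_left_eq_self (fun x => f y * g x) (-y)).trans (lintegral_const_mul'' _ hg)
  simp only [lconvolution_def]
  rw [lintegral_lintegral_swap (by fun_prop)]
  simp_rw [inner]
  exact lintegral_mul_const'' _ hf

theorem abs_cross_le_norm_mul_norm (a b : E2) : |a 0 * b 1 - a 1 * b 0| ≤ ‖a‖ * ‖b‖ := by
  have lagrange : (a 0 * b 1 - a 1 * b 0) ^ 2 + (a 0 * b 0 + a 1 * b 1) ^ 2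
      = (‖a‖ * ‖b‖) ^ 2 := by
    rw [mul_pow, EuclideanSpace.real_norm_sq_eq, EuclideanSpace.real_norm_sq_eq,
      Fin.sum_univ_two, Fin.sum_univ_two]
    ring
  exact abs_le_of_sq_le_sq (by nlinarith [sq_nonneg (a 0 * b 0 + a 1 * b 1)]) (by positivity)

theorem abs_qgn_symbol_le (ξ η : E2) : |(ξ 0 * η 1 - ξ 1 * η 0) / ‖η‖| ≤ ‖ξ - η‖ := by
  have hcross : ξ 0 * η 1 - ξ 1 * η 0 = (ξ - η) 0 * η 1 - (ξ - η) 1 * η 0 := by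
    simp only [PiLp.sub_apply]; ring
  rw [abs_div, abs_norm, hcross]
  exact div_le_of_le_mul₀ (norm_nonneg _) (norm_nonneg _) (abs_cross_le_norm_mul_norm _ _)

theorem enorm_integral_mul_le_of_norm_le_one {α 𝕜 : Type*} [MeasurableSpace α] [RCLike 𝕜]
    {μ : Measure α} {k h : α → 𝕜} (hk : ∀ᵐ z ∂μ, ‖k z‖ ≤ 1) :
    ‖∫ z, k z * h z ∂μ‖ₑ ≤ ∫⁻ z, ‖h z‖ₑ ∂μ := by
  refine (enorm_integral_le_lintegral_enorm _).trans (lintegral_mono_ae (hk.mono fun z hz => ?_))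
  rw [enorm_mul, ← ofReal_norm (k z)]
  exact mul_le_of_le_one_left' (ENNReal.ofReal_le_one.2 hz)

theorem Xnorm_zero (g : E2 → ℂ) : Xnorm 0 g = ∫⁻ ξ, ‖g ξ‖ₑ := by
  simp [Xnorm, enorm_eq_nnnorm]

theorem Xnorm_one (g : E2 → ℂ) : Xnorm 1 g = ∫⁻ ξ, ENNReal.ofReal ‖ξ‖ * ‖g ξ‖ₑ := by
  simp [Xnorm, enorm_eq_nnnorm]

theorem measurable_Xnorm (σ : ℝ) {Θ : ℝ → E2 → ℂ} (hΘ : Measurable (Function.uncurry Θ)) :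
    Measurable fun z => Xnorm σ (Θ z) :=
  Measurable.lintegral_prod_right'
    (f := fun p : ℝ × E2 => ENNReal.ofReal (‖p.2‖ ^ σ) * ‖Θ p.1 p.2‖₊) (by fun_prop)

def qgnMajorant (Θ : ℝ → E2 → ℂ) (z : ℝ) : E2 → ℝ≥0∞ :=
  (fun η => ‖Θ z η‖ₑ) ⋆ₗ (fun η => ENNReal.ofReal ‖η‖ * ‖Θ z η‖ₑ)

theorem enorm_QGN_le (Θ : ℝ → E2 → ℂ) (z : ℝ) (ξ : E2) : ‖QGN Θ z ξ‖ₑ ≤ qgnMajorant Θ z ξ := by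
  refine (enorm_integral_le_lintegral_enorm _).trans (lintegral_mono fun η => ?_)
  have hsymbol : ‖(((ξ 0 * η 1 - ξ 1 * η 0) / ‖η‖ : ℝ) : ℂ)‖ₑ ≤ ENNReal.ofReal ‖ξ - η‖ := by
    rw [← ofReal_norm, Complex.norm_real, Real.norm_eq_abs]
    exact ENNReal.ofReal_le_ofReal (abs_qgn_symbol_le ξ η)
  dsimp only
  rw [enorm_mul, enorm_mul, neg_add_eq_sub, mul_comm]
  gcongr

theorem lintegral_qgnMajorant {Θ : ℝ → E2 → ℂ} {z : ℝ} (hΘz : Measurable (Θ z)) :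
    ∫⁻ ξ, qgnMajorant Θ z ξ = Xnorm 0 (Θ z) * Xnorm 1 (Θ z) := by
  rw [qgnMajorant, lintegral_lconvolution (by fun_prop) (by fun_prop), Xnorm_zero, Xnorm_one]

theorem measurable_uncurry_qgnMajorant {Θ : ℝ → E2 → ℂ} (hΘ : Measurable (Function.uncurry Θ)) :
    Measurable (Function.uncurry (qgnMajorant Θ)) :=
  Measurable.lintegral_prod_right' (f := fun p : (ℝ × E2) × E2 =>
    ‖Θ p.1.1 p.2‖ₑ * (ENNReal.ofReal ‖-p.2 + p.1.2‖ * ‖Θ p.1.1 (-p.2 + p.1.2)‖ₑ)) (by fun_prop)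

theorem duhamel_X0_bound_general (T : ℝ)
    (Θ : ℝ → E2 → ℂ) (hmeas : Measurable (Function.uncurry Θ)) :
    ∀ t ∈ Set.Icc (0:ℝ) T,
      (∫⁻ ξ : E2,
          (‖∫ z in (0:ℝ)..t, ((Real.exp (-((t - z) * ‖ξ‖)) : ℝ) : ℂ) * QGN Θ z ξ‖₊ : ℝ≥0∞))
        ≤ (⨆ s ∈ Set.Icc (0:ℝ) T, Xnorm 0 (Θ s)) *
            ∫⁻ s in Set.Icc (0:ℝ) T, Xnorm 1 (Θ s) := by
  rintro t ⟨ht0, htT⟩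
  set M := ⨆ s ∈ Set.Icc (0:ℝ) T, Xnorm 0 (Θ s)
  have hIoc : Set.Ioc 0 t ⊆ Set.Icc 0 T := fun z hz => ⟨hz.1.le, hz.2.trans htT⟩
  calc _ ≤ ∫⁻ ξ, ∫⁻ z in Set.Ioc 0 t, qgnMajorant Θ z ξ := lintegral_mono fun ξ => by
        rw [← enorm_eq_nnnorm, intervalIntegral.integral_of_le ht0]
        refine (enorm_integral_mul_le_of_norm_le_one ?_).trans
          (lintegral_mono fun z => enorm_QGN_le Θ z ξ)
        filter_upwards [ae_restrict_mem measurableSet_Ioc] with z hz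
        rw [Complex.norm_real, Real.norm_of_nonneg (Real.exp_pos _).le, Real.exp_le_one_iff,
          neg_nonpos]
        exact mul_nonneg (sub_nonneg.2 hz.2) (norm_nonneg ξ)
    _ = ∫⁻ z in Set.Ioc 0 t, ∫⁻ ξ, qgnMajorant Θ z ξ :=
        lintegral_lintegral_swap
          ((measurable_uncurry_qgnMajorant hmeas).comp measurable_swap).aemeasurable
    _ = ∫⁻ z in Set.Ioc 0 t, Xnorm 0 (Θ z) * Xnorm 1 (Θ z) := by
        simp_rw [lintegral_qgnMajorant hmeas.of_uncurry_left]
    _ ≤ ∫⁻ z in Set.Ioc 0 t, M * Xnorm 1 (Θ z) :=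
        setLIntegral_mono' measurableSet_Ioc fun z hz => by
          gcongr
          exact le_biSup (fun s => Xnorm 0 (Θ s)) (hIoc hz)
    _ = M * ∫⁻ z in Set.Ioc 0 t, Xnorm 1 (Θ z) :=
        lintegral_const_mul M (measurable_Xnorm 1 hmeas)
    _ ≤ M * ∫⁻ z in Set.Icc 0 T, Xnorm 1 (Θ z) := by gcongr

/-- Lemma 2.3: `X⁰` bound for the Duhamel term:
`‖∫₀^t e^{-(t-z)|D|} N[Θ](z) dz‖_{X⁰} ≤ (sup_{[0,T]}‖Θ‖_{X⁰})(∫₀^T ‖Θ‖_{X¹})`. -/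
theorem duhamel_X0_bound (T : ℝ) (hT : 0 < T)
    (Θ : ℝ → E2 → ℂ) (hmeas : Measurable (Function.uncurry Θ))
    (hsup : (⨆ t ∈ Set.Icc (0:ℝ) T, Xnorm 0 (Θ t)) < ⊤)
    (hint : (∫⁻ t in Set.Icc (0:ℝ) T, Xnorm 1 (Θ t)) < ⊤) :
    ∀ t ∈ Set.Icc (0:ℝ) T,
      (∫⁻ ξ : E2,
          (‖∫ z in (0:ℝ)..t, ((Real.exp (-((t - z) * ‖ξ‖)) : ℝ) : ℂ) * QGN Θ z ξ‖₊ : ℝ≥0∞))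
        ≤ (⨆ s ∈ Set.Icc (0:ℝ) T, Xnorm 0 (Θ s)) *
            ∫⁻ s in Set.Icc (0:ℝ) T, Xnorm 1 (Θ s) :=
  duhamel_X0_bound_general T Θ hmeas

end
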